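/- Let G be a σ-compact locally compact Hausdorff topological group and H₁, H₂ non-empty subsets of G. Then H₁ ∼ H₂ (i.e., there exists a compact D ⊆ G with H₁ ⊆ D·H₂·D⁻¹ and H₂ ⊆ D·H₁·D⁻¹) if and only if the pairs (H₁, H') and (H₂, H') are simultaneously proper or not proper for every non-empty subset H' of G. -/

import Mathlib

open scoped Pointwise

/-- `N̄_D(H) = D · H · D⁻¹` for subsets of a group. -/
def grpNbhd {G : Type*} [Group G] (D H : Set G) : Set G := D * H * D⁻¹

/-- `H₁ ∼ H₂` in a topological group `G`. -/
def simGrp {G : Type*} [Group G] [TopologicalSpace G] (H₁ H₂ : Set G) : Prop :=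
  ∃ D : Set G, IsCompact D ∧ H₁ ⊆ grpNbhd D H₂ ∧ H₂ ⊆ grpNbhd D H₁

/-- A pair `(H₁, H₂)` of subsets of a topological group is proper in `G`. -/
def IsProperPair {G : Type*} [Group G] [TopologicalSpace G] (H₁ H₂ : Set G) : Prop :=
  ∀ D₁ D₂ : Set G, IsCompact D₁ → IsCompact D₂ →
    IsCompact (closure (grpNbhd D₁ H₁ ∩ grpNbhd D₂ H₂))

/-!
If `H₂ ⊆ D H₁ D⁻¹` for a compact `D`, every pair that is proper for `H₁` is proper for `H₂`,
which gives the forward implication. Conversely, suppose `H₂ ⊄ D H₁ D⁻¹` for every compact `D`.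
Fix a compact exhaustion `(Kₙ)` of `G` and pick `xₙ ∈ H₂ \ N̄_{Kₙ⁻¹ Kₙ}(H₁)`. Then
`H' = {xₙ}` separates `H₁` from `H₂`: if `D₁ H₁ D₁⁻¹` meets `D₂ xₙ D₂⁻¹` then
`xₙ ∈ N̄_{D₂⁻¹ D₁}(H₁)`, which forces `n` below the index of an exhaustion set containing
`D₁ ∪ D₂`, so `(H₁, H')` is proper; while `(H₂, H')` is not, since otherwise all `xₙ` would lie
in one `Kₘ`, and `xₙ ∈ N̄_{Kₙ⁻¹ Kₙ}(H₁)` as soon as `Kₙ` contains `xₙ` and a point of `H₁`.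
-/

section Group

variable {G : Type*} [Group G] {D D' H H' : Set G}

lemma mem_grpNbhd {x : G} : x ∈ grpNbhd D H ↔ ∃ a ∈ D, ∃ y ∈ H, ∃ b ∈ D, a * y * b⁻¹ = x := by
  simp only [grpNbhd, Set.mem_mul, Set.mem_inv]
  constructor
  · rintro ⟨_, ⟨a, ha, y, hy, rfl⟩, c, hc, rfl⟩
    exact ⟨a, ha, y, hy, c⁻¹, hc, by rw [inv_inv]⟩
  · rintro ⟨a, ha, y, hy, b, hb, rfl⟩
    exact ⟨a * y, ⟨a, ha, y, hy, rfl⟩, b⁻¹, by rwa [inv_inv], rfl⟩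

lemma grpNbhd_mono_left (h : D ⊆ D') : grpNbhd D H ⊆ grpNbhd D' H :=
  Set.mul_subset_mul (Set.mul_subset_mul_right h) (Set.inv_subset_inv.2 h)

lemma grpNbhd_mono_right (h : H ⊆ H') : grpNbhd D H ⊆ grpNbhd D H' :=
  Set.mul_subset_mul_right (Set.mul_subset_mul_left h)

lemma grpNbhd_grpNbhd : grpNbhd D (grpNbhd D' H) = grpNbhd (D * D') H := by
  simp only [grpNbhd, mul_inv_rev, mul_assoc]

@[simp]
lemma grpNbhd_one : grpNbhd 1 H = H := by
  simp [grpNbhd]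

lemma mem_grpNbhd_inv_mul_of_mul_mem {p q y : G} (hp : p ∈ D') (hq : q ∈ D')
    (h : p * y * q⁻¹ ∈ grpNbhd D H) : y ∈ grpNbhd (D'⁻¹ * D) H := by
  obtain ⟨c, hc, z, hz, d, hd, hxy⟩ := mem_grpNbhd.1 h
  refine mem_grpNbhd.2 ⟨p⁻¹ * c, Set.mul_mem_mul (Set.inv_mem_inv.2 hp) hc, z, hz,
    q⁻¹ * d, Set.mul_mem_mul (Set.inv_mem_inv.2 hq) hd, ?_⟩
  calc p⁻¹ * c * z * (q⁻¹ * d)⁻¹ = p⁻¹ * (c * z * d⁻¹) * q := by group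
    _ = y := by rw [hxy]; group

lemma mem_grpNbhd_inv_mul_of_mem {K : Set G} {x a : G} (hx : x ∈ K) (ha : a ∈ K)
    (haH : a ∈ H) : x ∈ grpNbhd (K⁻¹ * K) H :=
  mem_grpNbhd.2 ⟨a⁻¹ * a, Set.mul_mem_mul (Set.inv_mem_inv.2 ha) ha, a, haH,
    x⁻¹ * a, Set.mul_mem_mul (Set.inv_mem_inv.2 hx) ha, by group⟩

end Group

section Topological

variable {G : Type*} [Group G] [TopologicalSpace G] {H₁ H₂ H' : Set G}

lemma simGrp_iff_exists_subset :
    simGrp H₁ H₂ ↔ (∃ D, IsCompact D ∧ H₁ ⊆ grpNbhd D H₂) ∧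
      ∃ D, IsCompact D ∧ H₂ ⊆ grpNbhd D H₁ := by
  refine ⟨fun ⟨D, hD, h₁₂, h₂₁⟩ => ⟨⟨D, hD, h₁₂⟩, D, hD, h₂₁⟩, ?_⟩
  rintro ⟨⟨D, hD, h₁₂⟩, D', hD', h₂₁⟩
  exact ⟨D ∪ D', hD.union hD', h₁₂.trans (grpNbhd_mono_left Set.subset_union_left),
    h₂₁.trans (grpNbhd_mono_left Set.subset_union_right)⟩

lemma IsProperPair.isCompact_closure_inter (h : IsProperPair H₁ H₂) :
    IsCompact (closure (H₁ ∩ H₂)) := by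
  simpa using h 1 1 isCompact_singleton isCompact_singleton

lemma IsProperPair.of_subset_grpNbhd [ContinuousMul G] {D : Set G} (hD : IsCompact D)
    (hsub : H₁ ⊆ grpNbhd D H₂) (h : IsProperPair H₂ H') : IsProperPair H₁ H' := by
  intro D₁ D₂ hD₁ hD₂
  have hN : grpNbhd D₁ H₁ ⊆ grpNbhd (D₁ * D) H₂ :=
    (grpNbhd_mono_right hsub).trans grpNbhd_grpNbhd.subset
  exact (h _ D₂ (hD₁.mul hD) hD₂).of_isClosed_subset isClosed_closure
    (closure_mono (Set.inter_subset_inter_left _ hN))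

variable [IsTopologicalGroup G]

lemma IsCompact.grpNbhd {D H : Set G} (hD : IsCompact D) (hH : IsCompact H) :
    IsCompact (grpNbhd D H) :=
  (hD.mul hH).mul hD.inv

lemma isProperPair_of_forall_exists_isCompact
    (h : ∀ D₁ D₂ : Set G, IsCompact D₁ → IsCompact D₂ →
      ∃ T, IsCompact T ∧ grpNbhd D₁ H₁ ∩ grpNbhd D₂ H₂ ⊆ T) :
    IsProperPair H₁ H₂ := by
  intro D₁ D₂ hD₁ hD₂
  obtain ⟨T, hT, hsub⟩ := h D₁ D₂ hD₁ hD₂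
  exact hT.closure.of_isClosed_subset isClosed_closure (closure_mono hsub)

variable [LocallyCompactSpace G] [SigmaCompactSpace G]

lemma exists_isProperPair_not_isProperPair (h₁ : H₁.Nonempty)
    (hfar : ∀ D, IsCompact D → ¬ H₂ ⊆ grpNbhd D H₁) :
    ∃ H', H'.Nonempty ∧ IsProperPair H₁ H' ∧ ¬ IsProperPair H₂ H' := by
  let K := CompactExhaustion.choice G
  have hKmono {m n : ℕ} (h : m ≤ n) : (K m)⁻¹ * K m ⊆ (K n)⁻¹ * K n :=
    Set.mul_subset_mul (Set.inv_subset_inv.2 (K.subset h)) (K.subset h)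
  choose x hxH₂ hx using fun n ↦
    Set.not_subset.1 (hfar _ ((K.isCompact n).inv.mul (K.isCompact n)))
  refine ⟨Set.range x, Set.range_nonempty x, ?_, fun hprop ↦ ?_⟩
  · refine isProperPair_of_forall_exists_isCompact fun D₁ D₂ hD₁ hD₂ ↦ ?_
    obtain ⟨m, hm⟩ := K.exists_superset_of_isCompact (hD₁.union hD₂)
    refine ⟨grpNbhd D₂ (x '' Set.Iio m),
      hD₂.grpNbhd ((Set.finite_Iio m).image x).isCompact, ?_⟩
    rintro _ ⟨hy₁, hy₂⟩
    obtain ⟨p, hp, _, ⟨n, rfl⟩, q, hq, rfl⟩ := mem_grpNbhd.1 hy₂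
    have hn : n < m := by
      by_contra! hmn
      have hxn := mem_grpNbhd_inv_mul_of_mul_mem hp hq hy₁
      refine hx n (grpNbhd_mono_left ((Set.mul_subset_mul ?_ ?_).trans (hKmono hmn)) hxn)
      · exact Set.inv_subset_inv.2 (Set.subset_union_right.trans hm)
      · exact Set.subset_union_left.trans hm
    exact mem_grpNbhd.2 ⟨p, hp, x n, Set.mem_image_of_mem x hn, q, hq, rfl⟩
  · have hcl := hprop.isCompact_closure_inter
    rw [Set.inter_eq_right.2 (Set.range_subset_iff.2 hxH₂)] at hcl
    obtain ⟨m, hm⟩ := K.exists_superset_of_isCompact hcl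
    obtain ⟨a, ha⟩ := h₁
    obtain ⟨k, hk⟩ := K.exists_mem a
    exact hx (max m k) (mem_grpNbhd_inv_mul_of_mem
      (K.subset (le_max_left m k) (hm (subset_closure (Set.mem_range_self _))))
      (K.subset (le_max_right m k) hk) ha)

end Topological

theorem simGrp_iff_properPair_family_eq_general {G : Type*} [Group G] [TopologicalSpace G]
    [IsTopologicalGroup G] [LocallyCompactSpace G] [SigmaCompactSpace G]
    (H₁ H₂ : Set G) (h₁ : H₁.Nonempty) (h₂ : H₂.Nonempty) :
    simGrp H₁ H₂ ↔
      ∀ H' : Set G, H'.Nonempty → (IsProperPair H₁ H' ↔ IsProperPair H₂ H') := by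
  refine ⟨fun ⟨D, hD, h₁₂, h₂₁⟩ H' _ ↦
    ⟨(·.of_subset_grpNbhd hD h₂₁), (·.of_subset_grpNbhd hD h₁₂)⟩, fun hfam ↦ ?_⟩
  rw [simGrp_iff_exists_subset]
  constructor <;> by_contra! hfar
  · obtain ⟨H', hH', hp, hnp⟩ := exists_isProperPair_not_isProperPair h₂ hfar
    exact hnp ((hfam H' hH').2 hp)
  · obtain ⟨H', hH', hp, hnp⟩ := exists_isProperPair_not_isProperPair h₁ hfar
    exact hnp ((hfam H' hH').1 hp)

theorem simGrp_iff_properPair_family_eq {G : Type*} [Group G] [TopologicalSpace G]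
    [IsTopologicalGroup G] [LocallyCompactSpace G] [T2Space G] [SigmaCompactSpace G]
    (H₁ H₂ : Set G) (h₁ : H₁.Nonempty) (h₂ : H₂.Nonempty) :
    simGrp H₁ H₂ ↔
      ∀ H' : Set G, H'.Nonempty → (IsProperPair H₁ H' ↔ IsProperPair H₂ H') :=
  simGrp_iff_properPair_family_eq_general H₁ H₂ h₁ h₂
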